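/- arXiv:2511.06774 — 2 statements merged into one kernel-verified Lean document; each statement's English description precedes it below -/
import Mathlib

section
/- Suppose α_k ≥ c_1·k^{-q} and α_k ≤ C_1·k^{-q} for large k with 1/2 < q < 1, and ε_k ≤ C_2·k^{-p} with p > 0 and q + 2p > 1. Then L_K := (1/(K α_K))·∑_{k=0}^{K-1} α_k ε_k² satisfies L_K = O(K^{-(1-q)}), and in particular L_K → 0 as K → ∞. -/
/-!
Eventually `α_k ε_k² ≤ C₁ C₂² k^{-(q+2p)}`, which is summable because `q + 2p > 1`, so the
partial sums `∑_{k<K} α_k ε_k²` stay below the finite total `S`. Since `K α_K ≥ c₁ K^{1-q}`,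
this gives `L_K ≤ (S / c₁) K^{-(1-q)}`, which tends to `0` because `q < 1`.
-/

open Filter

lemma mul_sq_le_mul_rpow_neg {x a e C₁ C₂ q p : ℝ} (hx : 0 < x) (ha : 0 ≤ a) (he : 0 ≤ e)
    (haC : a ≤ C₁ * x ^ (-q)) (heC : e ≤ C₂ * x ^ (-p)) :
    a * e ^ 2 ≤ C₁ * C₂ ^ 2 * x ^ (-(q + 2 * p)) := by
  have hexp : x ^ (-(q + 2 * p)) = x ^ (-q) * (x ^ (-p)) ^ 2 := by
    rw [← Real.rpow_mul_natCast hx.le, ← Real.rpow_add hx]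
    push_cast
    ring_nf
  calc a * e ^ 2 ≤ C₁ * x ^ (-q) * (C₂ * x ^ (-p)) ^ 2 := by
        gcongr
        exact ha.trans haC
    _ = C₁ * C₂ ^ 2 * x ^ (-(q + 2 * p)) := by rw [hexp]; ring

lemma summable_of_eventually_le_rpow_neg {f : ℕ → ℝ} {C s : ℝ} (hs : 1 < s)
    (hf : ∀ k, 0 ≤ f k) (hle : ∀ᶠ k : ℕ in atTop, f k ≤ C * (k : ℝ) ^ (-s)) : Summable f :=
  .of_norm_bounded_eventually_nat ((Real.summable_nat_rpow (p := -s)).mpr (by linarith) |>.mul_left C) <| by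
    filter_upwards [hle] with k hk
    rwa [Real.norm_of_nonneg (hf k)]

lemma eventually_le_natCast_mul_of_le {a : ℕ → ℝ} {c q : ℝ}
    (h : ∀ᶠ k : ℕ in atTop, c * (k : ℝ) ^ (-q) ≤ a k) :
    ∀ᶠ K : ℕ in atTop, c * (K : ℝ) ^ (1 - q) ≤ K * a K := by
  filter_upwards [h, eventually_gt_atTop 0] with K hK hK0
  have hKpos : (0 : ℝ) < K := Nat.cast_pos.mpr hK0
  rw [sub_eq_neg_add, Real.rpow_add_one hKpos.ne']
  nlinarith

lemma eventually_one_div_mul_sum_range_le {f b : ℕ → ℝ} {c r : ℝ} (hc : 0 < c)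
    (hf : Summable f) (hf0 : ∀ k, 0 ≤ f k) (hb : ∀ᶠ K : ℕ in atTop, c * (K : ℝ) ^ r ≤ b K) :
    ∀ᶠ K : ℕ in atTop, 1 / b K * ∑ k ∈ Finset.range K, f k ≤ (∑' k, f k) / c * (K : ℝ) ^ (-r) := by
  filter_upwards [hb, eventually_gt_atTop 0] with K hK hK0
  have hKr : 0 < c * (K : ℝ) ^ r := mul_pos hc (Real.rpow_pos_of_pos (Nat.cast_pos.mpr hK0) r)
  calc 1 / b K * ∑ k ∈ Finset.range K, f k ≤ 1 / (c * (K : ℝ) ^ r) * ∑' k, f k := by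
        gcongr
        · exact Finset.sum_nonneg fun k _ => hf0 k
        · exact hf.sum_le_tsum _ fun k _ => hf0 k
    _ = (∑' k, f k) / c * (K : ℝ) ^ (-r) := by
        rw [Real.rpow_neg (Nat.cast_nonneg K)]
        field_simp

lemma tendsto_zero_of_eventually_le_rpow_neg {u : ℕ → ℝ} {C r : ℝ} (hr : 0 < r)
    (hu : ∀ K, 0 ≤ u K) (hle : ∀ᶠ K : ℕ in atTop, u K ≤ C * (K : ℝ) ^ (-r)) :
    Tendsto u atTop (nhds 0) := by
  have hlim : Tendsto (fun K : ℕ => C * (K : ℝ) ^ (-r)) atTop (nhds 0) := by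
    simpa using ((tendsto_rpow_neg_atTop hr).comp tendsto_natCast_atTop_atTop).const_mul C
  exact squeeze_zero' (Eventually.of_forall hu) hle hlim

theorem L_K_rate_case1_general (q p c₁ C₁ C₂ : ℝ) (hq1 : q < 1)
    (hcase : 1 < q + 2 * p) (hc₁ : 0 < c₁)
    (α ε : ℕ → ℝ) (hαpos : ∀ k, 0 < α k) (hεpos : ∀ k, 0 ≤ ε k)
    (hαbound : ∀ᶠ k : ℕ in atTop, c₁ * (k : ℝ) ^ (-q) ≤ α k ∧ α k ≤ C₁ * (k : ℝ) ^ (-q))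
    (hεbound : ∀ᶠ k : ℕ in atTop, ε k ≤ C₂ * (k : ℝ) ^ (-p)) :
    (∃ C : ℝ, ∀ᶠ K : ℕ in atTop,
        (1 / ((K : ℝ) * α K)) * ∑ k ∈ Finset.range K, α k * (ε k) ^ 2
          ≤ C * (K : ℝ) ^ (-(1 - q))) ∧
      Tendsto (fun K : ℕ =>
        (1 / ((K : ℝ) * α K)) * ∑ k ∈ Finset.range K, α k * (ε k) ^ 2) atTop (nhds 0) := by
  have hterm_nonneg : ∀ k, 0 ≤ α k * ε k ^ 2 := fun k => by have := hαpos k; positivity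
  have hsummable : Summable fun k => α k * ε k ^ 2 := by
    refine summable_of_eventually_le_rpow_neg (C := C₁ * C₂ ^ 2) hcase hterm_nonneg ?_
    filter_upwards [hαbound, hεbound, eventually_gt_atTop 0] with k hα hε hk
    exact mul_sq_le_mul_rpow_neg (Nat.cast_pos.mpr hk) (hαpos k).le (hεpos k) hα.2 hε
  have hrate := eventually_one_div_mul_sum_range_le hc₁ hsummable hterm_nonneg
    (eventually_le_natCast_mul_of_le (hαbound.mono fun _ h => h.1))
  refine ⟨⟨_, hrate⟩, tendsto_zero_of_eventually_le_rpow_neg (by linarith) (fun K => ?_) hrate⟩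
  have := hαpos K
  exact mul_nonneg (by positivity) (Finset.sum_nonneg fun k _ => hterm_nonneg k)

theorem L_K_rate_case1 (q p c₁ C₁ C₂ : ℝ) (hq : 1 / 2 < q) (hq1 : q < 1) (hp : 0 < p)
    (hcase : 1 < q + 2 * p) (hc₁ : 0 < c₁) (hC₁ : 0 < C₁) (hC₂ : 0 < C₂)
    (α ε : ℕ → ℝ) (hαpos : ∀ k, 0 < α k) (hεpos : ∀ k, 0 ≤ ε k)
    (hαbound : ∀ᶠ k : ℕ in atTop, c₁ * (k : ℝ) ^ (-q) ≤ α k ∧ α k ≤ C₁ * (k : ℝ) ^ (-q))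
    (hεbound : ∀ᶠ k : ℕ in atTop, ε k ≤ C₂ * (k : ℝ) ^ (-p)) :
    (∃ C : ℝ, ∀ᶠ K : ℕ in atTop,
        (1 / ((K : ℝ) * α K)) * ∑ k ∈ Finset.range K, α k * (ε k) ^ 2
          ≤ C * (K : ℝ) ^ (-(1 - q))) ∧
      Tendsto (fun K : ℕ =>
        (1 / ((K : ℝ) * α K)) * ∑ k ∈ Finset.range K, α k * (ε k) ^ 2) atTop (nhds 0) :=
  L_K_rate_case1_general q p c₁ C₁ C₂ hq1 hcase hc₁ α ε hαpos hεpos hαbound hεbound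
end

section
/- Let f: ℝ^d → ℝ be L-smooth and bounded below by f_inf, let ζ > 1/2, η > 0, and constants Ã, B̃, C̃ ≥ 0, ε ≥ 0, and suppose a step θ' = θ − α z with 0 < α ≤ ρ(2ζ−1)/(ζ L B̃) for some 0 < ρ < 1 satisfies ⟨∇f(θ), z⟩ ≥ (1 − 1/(2ζ))‖∇f(θ)‖² − (ζ/2)ε² and ‖z‖² ≤ 2Ã(f(θ) − f_inf) + B̃‖∇f(θ)‖² + C̃ + (1+η)ε². Then, with ρ̄ = (1−ρ)(2ζ−1)/ζ, (ρ̄/2)·α·‖∇f(θ)‖² ≤ (1 + α² L Ã)(f(θ) − f_inf) − (f(θ') − f_inf) + (α² L / 2)(C̃ + (1+η)ε²) + (ζ ε²/2)·α. -/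
/-!
By the descent lemma for `L`-smooth functions,
`f (θ - α • z) ≤ f θ - α ⟪∇f θ, z⟫ + (L α² / 2) ‖z‖²`. Inserting the lower bound on `⟪∇f θ, z⟫`
and the upper bound on `‖z‖²` leaves `-α (2ζ - 1) / (2ζ) + α² L B̃ / 2` as the coefficient of
`‖∇f θ‖²`, and the step-size condition `α L B̃ / 2 ≤ ρ (2ζ - 1) / (2ζ)` makes it at most
`-(1 - ρ) α (2ζ - 1) / (2ζ)`.
-/

open scoped RealInnerProductSpace NNReal

section Descent

variable {F : Type*} [NormedAddCommGroup F] [InnerProductSpace ℝ F] {f : F → ℝ} {g : F → F}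

theorem HasGradientAt.hasDerivAt_comp_add_smul [CompleteSpace F] {x v : F} {t : ℝ}
    (hf : HasGradientAt f (g (x + t • v)) (x + t • v)) :
    HasDerivAt (fun s : ℝ ↦ f (x + s • v)) ⟪g (x + t • v), v⟫ t := by
  have hline : HasDerivAt (fun s : ℝ ↦ x + s • v) v t := by
    simpa using ((hasDerivAt_id t).smul_const v).const_add x
  exact (hasGradientAt_iff_hasFDerivAt.mp hf).comp_hasDerivAt t hline

theorem LipschitzWith.inner_sub_le {L : ℝ≥0} (hg : LipschitzWith L g) (x v : F) {t : ℝ}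
    (ht : 0 ≤ t) : ⟪g (x + t • v) - g x, v⟫ ≤ L * t * ‖v‖ ^ 2 :=
  calc ⟪g (x + t • v) - g x, v⟫ ≤ ‖g (x + t • v) - g x‖ * ‖v‖ := real_inner_le_norm _ _
    _ ≤ L * ‖t • v‖ * ‖v‖ := by
        gcongr
        simpa [dist_eq_norm] using hg.dist_le_mul (x + t • v) x
    _ = L * t * ‖v‖ ^ 2 := by rw [norm_smul, Real.norm_of_nonneg ht]; ring

/-- The descent lemma: on `[0, 1]`, `t ↦ f (x + t • v)` is fenced by its quadratic upper model,
whose derivative dominates `⟪g (x + t • v), v⟫` by `LipschitzWith.inner_sub_le`. -/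
theorem le_add_inner_gradient_add_sq_of_lipschitzWith [CompleteSpace F] {L : ℝ≥0}
    (hf : ∀ x, HasGradientAt f (g x) x) (hg : LipschitzWith L g) (x y : F) :
    f y ≤ f x + ⟪g x, y - x⟫ + L / 2 * ‖y - x‖ ^ 2 := by
  set v := y - x
  have hderiv (t : ℝ) : HasDerivAt (fun s : ℝ ↦ f (x + s • v)) ⟪g (x + t • v), v⟫ t :=
    (hf _).hasDerivAt_comp_add_smul
  have hmodel (t : ℝ) :
      HasDerivAt (fun s : ℝ ↦ f x + s * ⟪g x, v⟫ + L / 2 * s ^ 2 * ‖v‖ ^ 2)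
        (⟪g x, v⟫ + L * t * ‖v‖ ^ 2) t := by
    refine ((((hasDerivAt_id' t).mul_const ⟪g x, v⟫).const_add (f x)).add
      (((hasDerivAt_pow 2 t).const_mul ((L : ℝ) / 2)).mul_const (‖v‖ ^ 2))).congr_deriv ?_
    ring
  have hfence := image_le_of_deriv_right_le_deriv_boundary (a := 0) (b := 1)
    (fun t _ ↦ (hderiv t).continuousAt.continuousWithinAt)
    (fun t _ ↦ (hderiv t).hasDerivWithinAt) (by simp)
    (fun t _ ↦ (hmodel t).continuousAt.continuousWithinAt)
    (fun t _ ↦ (hmodel t).hasDerivWithinAt)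
    (fun t ht ↦ by
      have := hg.inner_sub_le x v ht.1
      rw [inner_sub_left] at this
      linarith) (Set.right_mem_Icc.mpr zero_le_one)
  simpa [v] using hfence

end Descent

theorem one_step_descent_inexact_general {d : ℕ} (f : EuclideanSpace ℝ (Fin d) → ℝ)
    (g : EuclideanSpace ℝ (Fin d) → EuclideanSpace ℝ (Fin d)) (L : NNReal)
    (hgrad : ∀ x, HasGradientAt f (g x) x) (hLip : LipschitzWith L g)
    (f_inf : ℝ)
    (ζ η ρ Atil Btil Ctil ε α : ℝ) (hζ : 1 / 2 < ζ) (hρ0 : 0 < ρ)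
    (hBtil : 0 ≤ Btil)
    (hα0 : 0 < α) (hα : α ≤ ρ * (2 * ζ - 1) / (ζ * (L : ℝ) * Btil))
    (θ z : EuclideanSpace ℝ (Fin d))
    (hinner : ⟪g θ, z⟫ ≥ (1 - 1 / (2 * ζ)) * ‖g θ‖ ^ 2 - (ζ / 2) * ε ^ 2)
    (hnorm : ‖z‖ ^ 2 ≤ 2 * Atil * (f θ - f_inf) + Btil * ‖g θ‖ ^ 2 + Ctil + (1 + η) * ε ^ 2) :
    ((1 - ρ) * (2 * ζ - 1) / ζ) / 2 * α * ‖g θ‖ ^ 2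
      ≤ (1 + α ^ 2 * (L : ℝ) * Atil) * (f θ - f_inf) - (f (θ - α • z) - f_inf)
        + α ^ 2 * (L : ℝ) / 2 * (Ctil + (1 + η) * ε ^ 2) + (ζ * ε ^ 2 / 2) * α := by
  have hζ0 : 0 < ζ := by linarith
  have hcoef : 1 - 1 / (2 * ζ) = (2 * ζ - 1) / ζ / 2 := by field_simp
  rw [hcoef] at hinner
  have hstep : α * (L * Btil) ≤ ρ * (2 * ζ - 1) / ζ := by
    rw [mul_assoc, ← div_div] at hα
    exact mul_le_of_le_div₀ (div_nonneg (mul_nonneg hρ0.le (by linarith)) hζ0.le)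
      (by positivity) hα
  have hdesc := le_add_inner_gradient_add_sq_of_lipschitzWith hgrad hLip θ (θ - α • z)
  rw [sub_sub_cancel_left, inner_neg_right, real_inner_smul_right, norm_neg, norm_smul, mul_pow,
    Real.norm_eq_abs, sq_abs] at hdesc
  linear_combination hdesc + α * hinner + (L * α ^ 2 / 2) * hnorm + (α * ‖g θ‖ ^ 2 / 2) * hstep

theorem one_step_descent_inexact {d : ℕ} (f : EuclideanSpace ℝ (Fin d) → ℝ)
    (g : EuclideanSpace ℝ (Fin d) → EuclideanSpace ℝ (Fin d)) (L : NNReal)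
    (hgrad : ∀ x, HasGradientAt f (g x) x) (hLip : LipschitzWith L g)
    (f_inf : ℝ) (hbelow : ∀ x, f_inf ≤ f x)
    (ζ η ρ Atil Btil Ctil ε α : ℝ) (hζ : 1 / 2 < ζ) (hη : 0 < η) (hρ0 : 0 < ρ) (hρ1 : ρ < 1)
    (hAtil : 0 ≤ Atil) (hBtil : 0 ≤ Btil) (hCtil : 0 ≤ Ctil) (hε : 0 ≤ ε)
    (hα0 : 0 < α) (hα : α ≤ ρ * (2 * ζ - 1) / (ζ * (L : ℝ) * Btil))
    (θ z : EuclideanSpace ℝ (Fin d))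
    (hinner : ⟪g θ, z⟫ ≥ (1 - 1 / (2 * ζ)) * ‖g θ‖ ^ 2 - (ζ / 2) * ε ^ 2)
    (hnorm : ‖z‖ ^ 2 ≤ 2 * Atil * (f θ - f_inf) + Btil * ‖g θ‖ ^ 2 + Ctil + (1 + η) * ε ^ 2) :
    ((1 - ρ) * (2 * ζ - 1) / ζ) / 2 * α * ‖g θ‖ ^ 2
      ≤ (1 + α ^ 2 * (L : ℝ) * Atil) * (f θ - f_inf) - (f (θ - α • z) - f_inf)
        + α ^ 2 * (L : ℝ) / 2 * (Ctil + (1 + η) * ε ^ 2) + (ζ * ε ^ 2 / 2) * α :=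
  one_step_descent_inexact_general f g L hgrad hLip f_inf ζ η ρ Atil Btil Ctil ε α hζ hρ0 hBtil hα0
    hα θ z hinner hnorm
end
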